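/- Let (X,d) be a quasi cone metric space in which forward convergence implies backward convergence. Then every forward compact subset K ⊆ X is backward totally bounded, i.e., for every u ∈ P° there exist finitely many points y_1,…,y_n ∈ K such that K ⊆ ⋃ B_b(y_j,u). -/

import Mathlib

/-!
If forward convergence implies backward convergence, every backward ball `B_b(a, u)` contains
a forward ball `B_f(a, v)`: otherwise one picks `y_n ∈ B_f(a, u₀/(n+1)) \ B_b(a, u)`, a sequence
converging forward to `a` but never entering `B_b(a, u)`. Covering the forward compact set `K`
by these forward balls and extracting a finite subcover gives the backward cover.
-/

open TopologicalSpace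

/-- A quasi cone metric space on `X` with values in a real Banach space `E`,
ordered by a cone `P` with nonempty interior. -/
structure QCMS (X : Type*) (E : Type*) [NormedAddCommGroup E] [NormedSpace ℝ E] : Type _ where
  P : Set E
  P_closed : IsClosed P
  P_ne : P ≠ {0}
  P_nonempty : P.Nonempty
  P_smul_add : ∀ ⦃x⦄, x ∈ P → ∀ ⦃y⦄, y ∈ P → ∀ s t : ℝ, 0 ≤ s → 0 ≤ t → s • x + t • y ∈ P
  P_eq_zero : ∀ x, x ∈ P → -x ∈ P → x = 0
  P_int : (interior P).Nonempty
  d : X → X → E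
  d_mem : ∀ x y, d x y ∈ P
  d_eq_zero_iff : ∀ x y, d x y = 0 ↔ x = y
  triangle : ∀ x y z, d x z + d z y - d x y ∈ P

namespace QCMS

variable {X E : Type*} [NormedAddCommGroup E] [NormedSpace ℝ E]

/-- `a ≪ b` : `b - a` lies in the interior of the cone. -/
def lt' (Q : QCMS X E) (a b : E) : Prop := b - a ∈ interior Q.P

/-- Forward open ball. -/
def ballF (Q : QCMS X E) (x : X) (u : E) : Set X := {y | Q.lt' (Q.d x y) u}

/-- Backward open ball. -/
def ballB (Q : QCMS X E) (x : X) (u : E) : Set X := {y | Q.lt' (Q.d y x) u}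

/-- The forward topology, generated by forward open balls. -/
def Tf (Q : QCMS X E) : TopologicalSpace X :=
  generateFrom {s | ∃ x u, u ∈ interior Q.P ∧ s = Q.ballF x u}

/-- The backward topology, generated by backward open balls. -/
def Tb (Q : QCMS X E) : TopologicalSpace X :=
  generateFrom {s | ∃ x u, u ∈ interior Q.P ∧ s = Q.ballB x u}

/-- Forward convergence of a sequence. -/
def FConv (Q : QCMS X E) (x : ℕ → X) (a : X) : Prop :=
  ∀ u ∈ interior Q.P, ∃ N, ∀ n ≥ N, Q.lt' (Q.d a (x n)) u

/-- Backward convergence of a sequence. -/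
def BConv (Q : QCMS X E) (x : ℕ → X) (a : X) : Prop :=
  ∀ u ∈ interior Q.P, ∃ N, ∀ n ≥ N, Q.lt' (Q.d (x n) a) u

/-- Forward Cauchy sequence. -/
def FCauchy (Q : QCMS X E) (x : ℕ → X) : Prop :=
  ∀ u ∈ interior Q.P, ∃ N, ∀ m n, N ≤ m → m ≤ n → Q.lt' (Q.d (x m) (x n)) u

/-- Forward sequential compactness of the whole space. -/
def FSeqCompact (Q : QCMS X E) : Prop :=
  ∀ x : ℕ → X, ∃ (a : X) (φ : ℕ → ℕ), StrictMono φ ∧ Q.FConv (x ∘ φ) a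

/-- Forward total boundedness of the whole space. -/
def FTotallyBounded (Q : QCMS X E) : Prop :=
  ∀ u ∈ interior Q.P, ∃ t : Finset X, ∀ y : X, ∃ c ∈ t, y ∈ Q.ballF c u

/-- Forward completeness. -/
def FComplete (Q : QCMS X E) : Prop :=
  ∀ x : ℕ → X, Q.FCauchy x → ∃ a, Q.FConv x a

variable (Q : QCMS X E)

theorem add_mem {a b : E} (ha : a ∈ Q.P) (hb : b ∈ Q.P) : a + b ∈ Q.P := by
  simpa using Q.P_smul_add ha hb 1 1 zero_le_one zero_le_one

theorem smul_mem {t : ℝ} (ht : 0 ≤ t) {a : E} (ha : a ∈ Q.P) : t • a ∈ Q.P := by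
  simpa using Q.P_smul_add ha ha t 0 ht le_rfl

theorem add_mem_interior {a b : E} (ha : a ∈ interior Q.P) (hb : b ∈ Q.P) :
    a + b ∈ interior Q.P := by
  refine interior_maximal ?_ ((Homeomorph.addRight b).isOpenMap _ isOpen_interior) ⟨a, ha, rfl⟩
  rintro _ ⟨x, hx, rfl⟩
  exact Q.add_mem (interior_subset hx) hb

theorem smul_mem_interior {t : ℝ} (ht : 0 < t) {a : E} (ha : a ∈ interior Q.P) :
    t • a ∈ interior Q.P := by
  refine interior_maximal ?_
    ((Homeomorph.smulOfNeZero t ht.ne').isOpenMap _ isOpen_interior) ⟨a, ha, rfl⟩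
  rintro _ ⟨x, hx, rfl⟩
  exact Q.smul_mem ht.le (interior_subset hx)

theorem lt'_trans {a b c : E} (hab : Q.lt' a b) (hbc : Q.lt' b c) : Q.lt' a c := by
  have := Q.add_mem_interior hbc (interior_subset hab)
  rwa [sub_add_sub_cancel] at this

theorem eventually_lt'_inv_smul (u₀ : E) {w : E} (hw : w ∈ interior Q.P) :
    ∀ᶠ n : ℕ in Filter.atTop, Q.lt' (((n : ℝ) + 1)⁻¹ • u₀) w := by
  have hε : Filter.Tendsto (fun n : ℕ => ((n : ℝ) + 1)⁻¹) Filter.atTop (nhds 0) := by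
    simpa [one_div] using tendsto_one_div_add_atTop_nhds_zero_nat (𝕜 := ℝ)
  have hlim : Filter.Tendsto (fun n : ℕ => w - ((n : ℝ) + 1)⁻¹ • u₀) Filter.atTop (nhds w) := by
    simpa using tendsto_const_nhds.sub (hε.smul_const u₀)
  exact hlim.eventually (isOpen_interior.eventually_mem hw)

theorem mem_ballF_self {u : E} (hu : u ∈ interior Q.P) (x : X) : x ∈ Q.ballF x u := by
  simpa [ballF, lt', (Q.d_eq_zero_iff x x).mpr rfl] using hu

theorem isOpen_ballF {u : E} (hu : u ∈ interior Q.P) (x : X) :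
    @IsOpen X Q.Tf (Q.ballF x u) :=
  isOpen_generateFrom_of_mem ⟨x, u, hu, rfl⟩

theorem exists_ballF_subset_ballB
    (h : ∀ (x : ℕ → X) (a : X), Q.FConv x a → Q.BConv x a)
    (a : X) {u : E} (hu : u ∈ interior Q.P) :
    ∃ v ∈ interior Q.P, Q.ballF a v ⊆ Q.ballB a u := by
  obtain ⟨u₀, hu₀⟩ := Q.P_int
  by_contra! hc
  have hv (n : ℕ) : ((n : ℝ) + 1)⁻¹ • u₀ ∈ interior Q.P :=
    Q.smul_mem_interior (by positivity) hu₀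
  choose y hyF hyB using fun n => Set.not_subset.mp (hc _ (hv n))
  have hF : Q.FConv y a := fun w hw => by
    obtain ⟨N, hN⟩ := (Q.eventually_lt'_inv_smul u₀ hw).exists_forall_of_atTop
    exact ⟨N, fun n hn => Q.lt'_trans (hyF n) (hN n hn)⟩
  obtain ⟨N, hN⟩ := h y a hF u hu
  exact hyB N (hN N le_rfl)

theorem exists_finset_cover_ballF {K : Set X} (hK : @IsCompact X Q.Tf K) {v : X → E}
    (hv : ∀ x, v x ∈ interior Q.P) :
    ∃ t : Finset X, ↑t ⊆ K ∧ ∀ y ∈ K, ∃ c ∈ t, y ∈ Q.ballF c (v c) := by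
  let := Q.Tf
  obtain ⟨t, htK, hcov⟩ := hK.elim_nhds_subcover (fun x => Q.ballF x (v x))
    fun x _ => (Q.isOpen_ballF (hv x) x).mem_nhds (Q.mem_ballF_self (hv x) x)
  refine ⟨t, htK, fun y hy => ?_⟩
  simpa only [Set.mem_iUnion₂, exists_prop] using hcov hy

end QCMS

/-- if forward convergence implies backward convergence, every forward
compact set is backward totally bounded. -/
theorem backward_totallyBounded_of_forward_compact {X E : Type*} [NormedAddCommGroup E]
    [NormedSpace ℝ E] (Q : QCMS X E)
    (h : ∀ (x : ℕ → X) (a : X), Q.FConv x a → Q.BConv x a)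
    (K : Set X) (hK : @IsCompact X Q.Tf K) :
    ∀ u ∈ interior Q.P, ∃ t : Finset X, ↑t ⊆ K ∧
      ∀ y ∈ K, ∃ c ∈ t, y ∈ Q.ballB c u := by
  intro u hu
  choose v hv hvB using fun a => Q.exists_ballF_subset_ballB h a hu
  obtain ⟨t, htK, hcov⟩ := Q.exists_finset_cover_ballF hK hv
  exact ⟨t, htK, fun y hy => (hcov y hy).imp fun c ⟨hc, hyc⟩ => ⟨hc, hvB c hyc⟩⟩
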